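/- Let (𝔤, ω) be a symplectic Lie algebra, q(x) := ω(x,·), r := q⁻¹, and let 𝒟(𝔤) := 𝔤 × 𝔤* be the double Lie algebra with bracket [(x,α),(y,β)] := ([x,y] + ad*_α y - ad*_β x, [α,β]_q + ad*_x β - ad*_y α). Then the endomorphism J of 𝒟(𝔤) defined by J(x,α) := (-r(α), q(x)) satisfies J ∘ J = -id, and its Nijenhuis tensor N_J(v₁,v₂) := [Jv₁, Jv₂] - [v₁,v₂] - J[v₁, Jv₂] - J[Jv₁, v₂] vanishes for all v₁, v₂ ∈ 𝒟(𝔤). -/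

import Mathlib

/-! Via `q`, identify `𝒟(𝔤)` with `𝔤 × 𝔤`. The coadjoint actions both become the left-symmetric
product `x ⬝ y := r (ad*_x (q y))`, so the bracket reads
`[(x,a),(y,b)] = ([x,y] + a ⬝ y - b ⬝ x, [a,b] + x ⬝ b - y ⬝ a)` and `J (x,a) = (-a, x)`.
Closedness of `ω` is exactly `[x,y] = x ⬝ y - y ⬝ x`; after this substitution both components
of `N_J` cancel term by term. -/

/-- The coadjoint action of `x : L` on the dual: `⟨coad x α, y⟩ = -⟨α, [x,y]⟩`. -/
noncomputable def coad {L : Type*} [LieRing L] [LieAlgebra ℝ L]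
    (x : L) (α : Module.Dual ℝ L) : Module.Dual ℝ L :=
  -(α ∘ₗ (LieAlgebra.ad ℝ L x))

/-- The bracket of the double Lie algebra `𝒟(𝔤) = 𝔤 × 𝔤*` of a symplectic Lie algebra:
`[(x,α),(y,β)] = ([x,y] + ad*_α y - ad*_β x, [α,β]_q + ad*_x β - ad*_y α)`, where
`[α,β]_q = q [r α, r β]` and `cstar` is the coadjoint action of `𝔤*` on `𝔤`. -/
noncomputable def dbrq {L : Type*} [LieRing L] [LieAlgebra ℝ L]
    (ω : L →ₗ[ℝ] Module.Dual ℝ L) (r : Module.Dual ℝ L →ₗ[ℝ] L)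
    (cstar : Module.Dual ℝ L → L → L)
    (u v : L × Module.Dual ℝ L) : L × Module.Dual ℝ L :=
  (⁅u.1, v.1⁆ + cstar u.2 v.1 - cstar v.2 u.1,
    ω ⁅r u.2, r v.2⁆ + coad u.1 v.2 - coad v.1 u.2)

/-- The almost complex structure `J(x,α) = (-q⁻¹ α, q x)` on `𝒟(𝔤)`. -/
noncomputable def Jcx {L : Type*} [LieRing L] [LieAlgebra ℝ L]
    (ω : L →ₗ[ℝ] Module.Dual ℝ L) (r : Module.Dual ℝ L →ₗ[ℝ] L)
    (v : L × Module.Dual ℝ L) : L × Module.Dual ℝ L :=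
  (-(r v.2), ω v.1)

section SymplecticDouble

variable {L : Type*} [LieRing L] [LieAlgebra ℝ L]
  {ω : L →ₗ[ℝ] Module.Dual ℝ L} {r : Module.Dual ℝ L →ₗ[ℝ] L}

variable (ω r) in
noncomputable def symplecticMul : L →ₗ[ℝ] L →ₗ[ℝ] L :=
  LinearMap.mk₂ ℝ (fun x y => r (coad x (ω y)))
    (fun x₁ x₂ y => by simp only [coad, map_add, LinearMap.comp_add, neg_add])
    (fun c x y => by simp only [coad, map_smul, LinearMap.comp_smul, map_neg, smul_neg])
    (fun x y₁ y₂ => by simp only [coad, map_add, LinearMap.add_comp, neg_add])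
    (fun c x y => by simp only [coad, map_smul, LinearMap.smul_comp, map_neg, smul_neg])

theorem omega_symplecticMul_apply (hr1 : ∀ α : Module.Dual ℝ L, ω (r α) = α) (x y z : L) :
    ω (symplecticMul ω r x y) z = -ω y ⁅x, z⁆ := by
  simp [symplecticMul, hr1, coad]

theorem coad_omega_eq (hr1 : ∀ α : Module.Dual ℝ L, ω (r α) = α) (x y : L) :
    coad x (ω y) = ω (symplecticMul ω r x y) :=
  (hr1 _).symm

theorem cstar_omega_eq (hskew : ∀ x y : L, ω x y = - ω y x)
    (hr1 : ∀ α : Module.Dual ℝ L, ω (r α) = α) (hr2 : ∀ x : L, r (ω x) = x)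
    {cstar : Module.Dual ℝ L → L → L}
    (hcstar : ∀ (α : Module.Dual ℝ L) (x : L) (β : Module.Dual ℝ L),
      β (cstar α x) = -((ω ⁅r α, r β⁆) x)) (a y : L) :
    cstar (ω a) y = symplecticMul ω r a y := by
  apply Function.LeftInverse.injective hr2
  ext z
  rw [omega_symplecticMul_apply hr1, hskew, hcstar, hr2, hr2, hskew, neg_neg]

theorem lie_eq_symplecticMul_sub (hskew : ∀ x y : L, ω x y = - ω y x)
    (hclosed : ∀ x y z : L, ω ⁅x, y⁆ z + ω ⁅y, z⁆ x + ω ⁅z, x⁆ y = 0)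
    (hr1 : ∀ α : Module.Dual ℝ L, ω (r α) = α) (hr2 : ∀ x : L, r (ω x) = x) (x y : L) :
    ⁅x, y⁆ = symplecticMul ω r x y - symplecticMul ω r y x := by
  apply Function.LeftInverse.injective hr2
  ext z
  have h := hclosed x y z
  rw [← lie_skew z x, map_neg, LinearMap.neg_apply] at h
  rw [map_sub, LinearMap.sub_apply, omega_symplecticMul_apply hr1, omega_symplecticMul_apply hr1,
    hskew y, hskew x]
  linarith

theorem Jcx_Jcx (hr1 : ∀ α : Module.Dual ℝ L, ω (r α) = α) (hr2 : ∀ x : L, r (ω x) = x)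
    (v : L × Module.Dual ℝ L) : Jcx ω r (Jcx ω r v) = -v :=
  Prod.ext (by simp [Jcx, hr2]) (by simp [Jcx, hr1])

theorem Jcx_mk_omega (hr2 : ∀ x : L, r (ω x) = x) (x a : L) :
    Jcx ω r (x, ω a) = (-a, ω x) := by
  rw [Jcx, hr2]

theorem dbrq_mk_omega (hskew : ∀ x y : L, ω x y = - ω y x)
    (hr1 : ∀ α : Module.Dual ℝ L, ω (r α) = α) (hr2 : ∀ x : L, r (ω x) = x)
    {cstar : Module.Dual ℝ L → L → L}
    (hcstar : ∀ (α : Module.Dual ℝ L) (x : L) (β : Module.Dual ℝ L),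
      β (cstar α x) = -((ω ⁅r α, r β⁆) x)) (x a y b : L) :
    dbrq ω r cstar (x, ω a) (y, ω b) =
      (⁅x, y⁆ + symplecticMul ω r a y - symplecticMul ω r b x,
        ω (⁅a, b⁆ + symplecticMul ω r x b - symplecticMul ω r y a)) := by
  simp only [dbrq, cstar_omega_eq hskew hr1 hr2 hcstar, hr2, coad_omega_eq hr1, map_add, map_sub]

end SymplecticDouble

theorem stmt17_general {L : Type*} [LieRing L] [LieAlgebra ℝ L]
    (ω : L →ₗ[ℝ] Module.Dual ℝ L)
    (hskew : ∀ x y : L, ω x y = - ω y x)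
    (hclosed : ∀ x y z : L, ω ⁅x, y⁆ z + ω ⁅y, z⁆ x + ω ⁅z, x⁆ y = 0)
    (r : Module.Dual ℝ L →ₗ[ℝ] L)
    (hr1 : ∀ α : Module.Dual ℝ L, ω (r α) = α)
    (hr2 : ∀ x : L, r (ω x) = x)
    (cstar : Module.Dual ℝ L → L → L)
    (hcstar : ∀ (α : Module.Dual ℝ L) (x : L) (β : Module.Dual ℝ L),
      β (cstar α x) = -((ω ⁅r α, r β⁆) x)) :
    (∀ v : L × Module.Dual ℝ L, Jcx ω r (Jcx ω r v) = -v) ∧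
    (∀ v₁ v₂ : L × Module.Dual ℝ L,
      dbrq ω r cstar (Jcx ω r v₁) (Jcx ω r v₂) - dbrq ω r cstar v₁ v₂
        - Jcx ω r (dbrq ω r cstar v₁ (Jcx ω r v₂))
        - Jcx ω r (dbrq ω r cstar (Jcx ω r v₁) v₂) = 0) := by
  refine ⟨Jcx_Jcx hr1 hr2, ?_⟩
  rintro ⟨x, α⟩ ⟨y, β⟩
  obtain ⟨a, rfl⟩ : ∃ a, α = ω a := ⟨r α, (hr1 α).symm⟩
  obtain ⟨b, rfl⟩ : ∃ b, β = ω b := ⟨r β, (hr1 β).symm⟩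
  simp only [Jcx_mk_omega hr2, dbrq_mk_omega hskew hr1 hr2 hcstar, Prod.mk_sub_mk, ← map_sub,
    Prod.mk_eq_zero, map_eq_zero_iff ω (Function.LeftInverse.injective hr2),
    lie_eq_symplecticMul_sub hskew hclosed hr1 hr2, map_neg, LinearMap.neg_apply]
  constructor <;> abel

/-- for a symplectic Lie algebra `(𝔤, ω)`, the endomorphism
`J(x,α) = (-q⁻¹ α, q x)` of the double `𝒟(𝔤)` satisfies `J ∘ J = -id` and its
Nijenhuis tensor vanishes. -/
theorem stmt17 {L : Type*} [LieRing L] [LieAlgebra ℝ L] [FiniteDimensional ℝ L]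
    (ω : L →ₗ[ℝ] Module.Dual ℝ L)
    (hskew : ∀ x y : L, ω x y = - ω y x)
    (hclosed : ∀ x y z : L, ω ⁅x, y⁆ z + ω ⁅y, z⁆ x + ω ⁅z, x⁆ y = 0)
    (r : Module.Dual ℝ L →ₗ[ℝ] L)
    (hr1 : ∀ α : Module.Dual ℝ L, ω (r α) = α)
    (hr2 : ∀ x : L, r (ω x) = x)
    (cstar : Module.Dual ℝ L → L → L)
    (hcstar : ∀ (α : Module.Dual ℝ L) (x : L) (β : Module.Dual ℝ L),
      β (cstar α x) = -((ω ⁅r α, r β⁆) x)) :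
    (∀ v : L × Module.Dual ℝ L, Jcx ω r (Jcx ω r v) = -v) ∧
    (∀ v₁ v₂ : L × Module.Dual ℝ L,
      dbrq ω r cstar (Jcx ω r v₁) (Jcx ω r v₂) - dbrq ω r cstar v₁ v₂
        - Jcx ω r (dbrq ω r cstar v₁ (Jcx ω r v₂))
        - Jcx ω r (dbrq ω r cstar (Jcx ω r v₁) v₂) = 0) :=
  stmt17_general ω hskew hclosed r hr1 hr2 cstar hcstar
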